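/- arXiv:math/9710208 — 3 statements merged into one kernel-verified Lean document; each statement's English description precedes it below -/
import Mathlib

section
/- Let Q ≥ 1. There exists a constant C > 0 (depending only on Q) such that for every l > 0 and every nonnegative Borel function f on [0, l], one has (1/l)∫₀^l f(t) dt ≤ C ( sup_{0 < r ≤ l} r^{-Q} ∫₀^r φ_l(t)^{Q-1} f(t) dt + sup_{0 < r ≤ l} r^{-Q} ∫_{l-r}^l φ_l(t)^{Q-1} f(t) dt ), where φ_l(t) = min(t, l − t). -/
open MeasureTheory Set
open scoped ENNReal

lemma pdml_dyadic_union {c : ℝ} (hc : 0 < c) :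
    Ioc (0:ℝ) c = ⋃ k : ℕ, Ioc (c / 2 ^ (k+1)) (c / 2 ^ k) := by
  ext t
  simp only [mem_iUnion, mem_Ioc]
  constructor
  · rintro ⟨ht0, htc⟩
    have hex : ∃ n : ℕ, c / 2 ^ (n+1) < t := by
      obtain ⟨n, hn⟩ := pow_unbounded_of_one_lt (c / t) (one_lt_two (α := ℝ))
      refine ⟨n, ?_⟩
      rw [div_lt_iff₀ (by positivity)] at hn ⊢
      nlinarith [pow_pos (two_pos (α := ℝ)) n, pow_succ (2:ℝ) n]
    refine ⟨Nat.find hex, Nat.find_spec hex, ?_⟩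
    rcases Nat.eq_zero_or_pos (Nat.find hex) with h0 | hpos
    · rw [h0]; simpa using htc
    · have hmin := Nat.find_min hex (Nat.pred_lt hpos.ne')
      push_neg at hmin
      have heq : (Nat.find hex).pred + 1 = Nat.find hex := Nat.succ_pred_eq_of_pos hpos
      rwa [heq] at hmin
  · rintro ⟨k, h1, h2⟩
    have h3 : (0:ℝ) < c / 2 ^ (k+1) := by positivity
    have h4 : c / 2 ^ k ≤ c := by
      apply div_le_self hc.le
      exact one_le_pow₀ one_le_two
    exact ⟨h3.trans h1, h2.trans h4⟩

lemma pdml_dyadic_union_right {l : ℝ} (hl : 0 < l) :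
    Ico (l/2) l = ⋃ k : ℕ, Ico (l - (l/2) / 2 ^ k) (l - (l/2) / 2 ^ (k+1)) := by
  ext t
  have h : t ∈ Ico (l/2) l ↔ (l - t) ∈ Ioc (0:ℝ) (l/2) := by
    simp only [mem_Ico, mem_Ioc]; constructor <;> (rintro ⟨a, b⟩; constructor <;> linarith)
  rw [h, pdml_dyadic_union (by linarith)]
  simp only [mem_iUnion, mem_Ioc, mem_Ico]
  constructor <;> (rintro ⟨k, h1, h2⟩; exact ⟨k, by linarith, by linarith⟩)

lemma pdml_geom : ∑' k : ℕ, ENNReal.ofReal (((2:ℝ) ^ (k+1))⁻¹) = 1 := by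
  have h : ∀ k : ℕ, ENNReal.ofReal (((2:ℝ) ^ (k+1))⁻¹) = (2⁻¹ : ℝ≥0∞) ^ (k+1) := by
    intro k
    rw [ENNReal.ofReal_inv_of_pos (by positivity), ENNReal.ofReal_pow (by norm_num),
      ENNReal.ofReal_ofNat, ← ENNReal.inv_pow]
  simp_rw [h, pow_succ]
  rw [ENNReal.tsum_mul_right, ENNReal.tsum_geometric, ENNReal.one_sub_inv_two, inv_inv,
    ENNReal.mul_inv_cancel (by norm_num) (by norm_num)]

/-- The dyadic maximal lemma (Lemma 5 of the paper). -/
theorem poincare_dyadic_maximal_lemma (Q : ℝ) (hQ : 1 ≤ Q) :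
    ∃ C : ℝ, 0 < C ∧ ∀ (l : ℝ), 0 < l → ∀ f : ℝ → ℝ≥0∞, Measurable f →
      ENNReal.ofReal (1 / l) * ∫⁻ t in Icc (0:ℝ) l, f t ≤
        ENNReal.ofReal C *
          ((⨆ r ∈ Ioc (0:ℝ) l, ENNReal.ofReal (r ^ (-Q)) *
              ∫⁻ t in Icc (0:ℝ) r, ENNReal.ofReal (min t (l - t) ^ (Q - 1)) * f t) +
           (⨆ r ∈ Ioc (0:ℝ) l, ENNReal.ofReal (r ^ (-Q)) *
              ∫⁻ t in Icc (l - r) l, ENNReal.ofReal (min t (l - t) ^ (Q - 1)) * f t)) := by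
  refine ⟨(2:ℝ) ^ (Q - 1), Real.rpow_pos_of_pos two_pos _, ?_⟩
  intro l hl f hf
  set A := ⨆ r ∈ Ioc (0:ℝ) l, ENNReal.ofReal (r ^ (-Q)) *
      ∫⁻ t in Icc (0:ℝ) r, ENNReal.ofReal (min t (l - t) ^ (Q - 1)) * f t with hA
  set B := ⨆ r ∈ Ioc (0:ℝ) l, ENNReal.ofReal (r ^ (-Q)) *
      ∫⁻ t in Icc (l - r) l, ENNReal.ofReal (min t (l - t) ^ (Q - 1)) * f t with hB
  have hgmeas : Measurable (fun t => ENNReal.ofReal (min t (l - t) ^ (Q - 1)) * f t) := by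
    refine Measurable.mul ?_ hf
    exact (Measurable.pow (measurable_id.min (measurable_const.sub measurable_id)) measurable_const).ennreal_ofReal
  -- maximal function bounds
  have hAr : ∀ r, r ∈ Ioc (0:ℝ) l →
      (∫⁻ t in Icc (0:ℝ) r, ENNReal.ofReal (min t (l - t) ^ (Q - 1)) * f t) ≤
        ENNReal.ofReal (r ^ Q) * A := by
    intro r hr
    have hone : ENNReal.ofReal (r ^ Q) * ENNReal.ofReal (r ^ (-Q)) = 1 := by
      rw [← ENNReal.ofReal_mul (Real.rpow_nonneg hr.1.le _), ← Real.rpow_add hr.1]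
      norm_num
    have h1 : ENNReal.ofReal (r ^ (-Q)) *
        (∫⁻ t in Icc (0:ℝ) r, ENNReal.ofReal (min t (l - t) ^ (Q - 1)) * f t) ≤ A := by
      rw [hA]
      exact le_iSup₂ (f := fun r (_ : r ∈ Ioc (0:ℝ) l) => ENNReal.ofReal (r ^ (-Q)) *
        ∫⁻ t in Icc (0:ℝ) r, ENNReal.ofReal (min t (l - t) ^ (Q - 1)) * f t) r hr
    calc (∫⁻ t in Icc (0:ℝ) r, ENNReal.ofReal (min t (l - t) ^ (Q - 1)) * f t)
        = ENNReal.ofReal (r ^ Q) * (ENNReal.ofReal (r ^ (-Q)) *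
            ∫⁻ t in Icc (0:ℝ) r, ENNReal.ofReal (min t (l - t) ^ (Q - 1)) * f t) := by
          rw [← mul_assoc, hone, one_mul]
      _ ≤ ENNReal.ofReal (r ^ Q) * A := mul_le_mul_right h1 _
  have hBr : ∀ r, r ∈ Ioc (0:ℝ) l →
      (∫⁻ t in Icc (l - r) l, ENNReal.ofReal (min t (l - t) ^ (Q - 1)) * f t) ≤
        ENNReal.ofReal (r ^ Q) * B := by
    intro r hr
    have hone : ENNReal.ofReal (r ^ Q) * ENNReal.ofReal (r ^ (-Q)) = 1 := by
      rw [← ENNReal.ofReal_mul (Real.rpow_nonneg hr.1.le _), ← Real.rpow_add hr.1]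
      norm_num
    have h1 : ENNReal.ofReal (r ^ (-Q)) *
        (∫⁻ t in Icc (l - r) l, ENNReal.ofReal (min t (l - t) ^ (Q - 1)) * f t) ≤ B := by
      rw [hB]
      exact le_iSup₂ (f := fun r (_ : r ∈ Ioc (0:ℝ) l) => ENNReal.ofReal (r ^ (-Q)) *
        ∫⁻ t in Icc (l - r) l, ENNReal.ofReal (min t (l - t) ^ (Q - 1)) * f t) r hr
    calc (∫⁻ t in Icc (l - r) l, ENNReal.ofReal (min t (l - t) ^ (Q - 1)) * f t)
        = ENNReal.ofReal (r ^ Q) * (ENNReal.ofReal (r ^ (-Q)) *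
            ∫⁻ t in Icc (l - r) l, ENNReal.ofReal (min t (l - t) ^ (Q - 1)) * f t) := by
          rw [← mul_assoc, hone, one_mul]
      _ ≤ ENNReal.ofReal (r ^ Q) * B := mul_le_mul_right h1 _
  -- per-piece bounds
  have left_piece : ∀ k : ℕ, (∫⁻ t in Ioc ((l/2)/2^(k+1)) ((l/2)/2^k), f t) ≤
      ENNReal.ofReal ((2:ℝ)^(Q-1) * l * ((2:ℝ)^(k+1))⁻¹) * A := by
    intro k
    set s : ℝ := (l/2)/2^(k+1) with hs_def
    set r : ℝ := (l/2)/2^k with hr_def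
    have hs : 0 < s := by positivity
    have hrpos : 0 < r := by positivity
    have hrhalf : r ≤ l/2 := by
      rw [hr_def]; exact div_le_self (by linarith) (one_le_pow₀ one_le_two)
    have hrl : r ≤ l := hrhalf.trans (by linarith)
    have hpt : ∀ t ∈ Ioc s r, f t ≤ ENNReal.ofReal (s ^ (1 - Q)) *
        (ENNReal.ofReal (min t (l - t) ^ (Q - 1)) * f t) := by
      intro t ht
      have hmin : min t (l - t) = t := min_eq_left (by
        have := ht.2.trans hrhalf; linarith)
      rw [hmin, ← mul_assoc, ← ENNReal.ofReal_mul (Real.rpow_nonneg hs.le _)]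
      have hx : (1:ℝ) ≤ s ^ (1 - Q) * t ^ (Q - 1) := by
        have h1 : s ^ (1-Q) * s ^ (Q-1) = 1 := by
          rw [← Real.rpow_add hs]
          have e : (1-Q) + (Q-1) = 0 := by ring
          rw [e, Real.rpow_zero]
        have hmono : s ^ (Q-1) ≤ t ^ (Q-1) :=
          Real.rpow_le_rpow hs.le ht.1.le (by linarith : (0:ℝ) ≤ Q - 1)
        calc (1:ℝ) = s ^ (1-Q) * s ^ (Q-1) := h1.symm
          _ ≤ s ^ (1-Q) * t ^ (Q-1) :=
            mul_le_mul_of_nonneg_left hmono (Real.rpow_nonneg hs.le _)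
      calc f t = 1 * f t := (one_mul _).symm
        _ ≤ ENNReal.ofReal (s ^ (1-Q) * t ^ (Q-1)) * f t :=
            mul_le_mul_left (ENNReal.one_le_ofReal.mpr hx) _
    calc (∫⁻ t in Ioc s r, f t)
        ≤ ∫⁻ t in Ioc s r, ENNReal.ofReal (s ^ (1-Q)) *
            (ENNReal.ofReal (min t (l - t) ^ (Q - 1)) * f t) :=
          setLIntegral_mono (measurable_const.mul hgmeas) hpt
      _ = ENNReal.ofReal (s ^ (1-Q)) * ∫⁻ t in Ioc s r,
            ENNReal.ofReal (min t (l - t) ^ (Q - 1)) * f t :=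
          lintegral_const_mul' _ _ ENNReal.ofReal_ne_top
      _ ≤ ENNReal.ofReal (s ^ (1-Q)) * ∫⁻ t in Icc (0:ℝ) r,
            ENNReal.ofReal (min t (l - t) ^ (Q - 1)) * f t :=
          by
            have hsub : Ioc s r ⊆ Icc (0:ℝ) r := fun t ht => ⟨(hs.trans ht.1).le, ht.2⟩
            exact mul_le_mul_right (lintegral_mono_set hsub) _
      _ ≤ ENNReal.ofReal (s ^ (1-Q)) * (ENNReal.ofReal (r ^ Q) * A) :=
          mul_le_mul_right (hAr r ⟨hrpos, hrl⟩) _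
      _ = ENNReal.ofReal ((2:ℝ)^(Q-1) * l * ((2:ℝ)^(k+1))⁻¹) * A := by
          rw [← mul_assoc, ← ENNReal.ofReal_mul (Real.rpow_nonneg hs.le _)]
          congr 2
          have hsr : s = r / 2 := by
            rw [hs_def, hr_def, pow_succ, ← div_div]
          rw [hsr, Real.div_rpow hrpos.le (by norm_num : (0:ℝ) ≤ 2),
            div_mul_eq_mul_div, ← Real.rpow_add hrpos]
          have e1 : 1 - Q + Q = 1 := by ring
          rw [e1, Real.rpow_one, div_eq_mul_inv, ← Real.rpow_neg (by norm_num : (0:ℝ) ≤ 2),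
            neg_sub]
          rw [hr_def, pow_succ]
          have h2k : ((2:ℝ))^k ≠ 0 := by positivity
          field_simp

  have right_piece : ∀ k : ℕ, (∫⁻ t in Ico (l - (l/2)/2^k) (l - (l/2)/2^(k+1)), f t) ≤
      ENNReal.ofReal ((2:ℝ)^(Q-1) * l * ((2:ℝ)^(k+1))⁻¹) * B := by
    intro k
    set s : ℝ := (l/2)/2^(k+1) with hs_def
    set r : ℝ := (l/2)/2^k with hr_def
    have hs : 0 < s := by positivity
    have hrpos : 0 < r := by positivity
    have hrhalf : r ≤ l/2 := by
      rw [hr_def]; exact div_le_self (by linarith) (one_le_pow₀ one_le_two)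
    have hrl : r ≤ l := hrhalf.trans (by linarith)
    have hpt : ∀ t ∈ Ico (l - r) (l - s), f t ≤ ENNReal.ofReal (s ^ (1 - Q)) *
        (ENNReal.ofReal (min t (l - t) ^ (Q - 1)) * f t) := by
      intro t ht
      have ht1 : l - r ≤ t := ht.1
      have ht2 : t < l - s := ht.2
      have hmin : min t (l - t) = l - t := min_eq_right (by linarith)
      rw [hmin, ← mul_assoc, ← ENNReal.ofReal_mul (Real.rpow_nonneg hs.le _)]
      have hx : (1:ℝ) ≤ s ^ (1 - Q) * (l - t) ^ (Q - 1) := by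
        have h1 : s ^ (1-Q) * s ^ (Q-1) = 1 := by
          rw [← Real.rpow_add hs]
          have e : (1-Q) + (Q-1) = 0 := by ring
          rw [e, Real.rpow_zero]
        have hmono : s ^ (Q-1) ≤ (l - t) ^ (Q-1) :=
          Real.rpow_le_rpow hs.le (by linarith : s ≤ l - t) (by linarith : (0:ℝ) ≤ Q - 1)
        calc (1:ℝ) = s ^ (1-Q) * s ^ (Q-1) := h1.symm
          _ ≤ s ^ (1-Q) * (l - t) ^ (Q-1) :=
            mul_le_mul_of_nonneg_left hmono (Real.rpow_nonneg hs.le _)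
      calc f t = 1 * f t := (one_mul _).symm
        _ ≤ ENNReal.ofReal (s ^ (1-Q) * (l - t) ^ (Q-1)) * f t :=
            mul_le_mul_left (ENNReal.one_le_ofReal.mpr hx) _
    calc (∫⁻ t in Ico (l - r) (l - s), f t)
        ≤ ∫⁻ t in Ico (l - r) (l - s), ENNReal.ofReal (s ^ (1-Q)) *
            (ENNReal.ofReal (min t (l - t) ^ (Q - 1)) * f t) :=
          setLIntegral_mono (measurable_const.mul hgmeas) hpt
      _ = ENNReal.ofReal (s ^ (1-Q)) * ∫⁻ t in Ico (l - r) (l - s),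
            ENNReal.ofReal (min t (l - t) ^ (Q - 1)) * f t :=
          lintegral_const_mul' _ _ ENNReal.ofReal_ne_top
      _ ≤ ENNReal.ofReal (s ^ (1-Q)) * ∫⁻ t in Icc (l - r) l,
            ENNReal.ofReal (min t (l - t) ^ (Q - 1)) * f t :=
          by
            have hsub : Ico (l - r) (l - s) ⊆ Icc (l - r) l := fun t ht =>
              ⟨ht.1, by have h2 := ht.2; linarith⟩
            exact mul_le_mul_right (lintegral_mono_set hsub) _
      _ ≤ ENNReal.ofReal (s ^ (1-Q)) * (ENNReal.ofReal (r ^ Q) * B) :=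
          mul_le_mul_right (hBr r ⟨hrpos, hrl⟩) _
      _ = ENNReal.ofReal ((2:ℝ)^(Q-1) * l * ((2:ℝ)^(k+1))⁻¹) * B := by
          rw [← mul_assoc, ← ENNReal.ofReal_mul (Real.rpow_nonneg hs.le _)]
          congr 2
          have hsr : s = r / 2 := by
            rw [hs_def, hr_def, pow_succ, ← div_div]
          rw [hsr, Real.div_rpow hrpos.le (by norm_num : (0:ℝ) ≤ 2),
            div_mul_eq_mul_div, ← Real.rpow_add hrpos]
          have e1 : 1 - Q + Q = 1 := by ring
          rw [e1, Real.rpow_one, div_eq_mul_inv, ← Real.rpow_neg (by norm_num : (0:ℝ) ≤ 2),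
            neg_sub]
          rw [hr_def, pow_succ]
          have h2k : ((2:ℝ))^k ≠ 0 := by positivity
          field_simp

  -- summation
  have left_sum : (∫⁻ t in Ioc (0:ℝ) (l/2), f t) ≤ ENNReal.ofReal ((2:ℝ)^(Q-1) * l) * A := by
    rw [pdml_dyadic_union (half_pos hl)]
    calc (∫⁻ t in ⋃ k : ℕ, Ioc ((l/2)/2^(k+1)) ((l/2)/2^k), f t)
        ≤ ∑' k : ℕ, ∫⁻ t in Ioc ((l/2)/2^(k+1)) ((l/2)/2^k), f t := lintegral_iUnion_le _ _
      _ ≤ ∑' k : ℕ, ENNReal.ofReal ((2:ℝ)^(Q-1) * l * ((2:ℝ)^(k+1))⁻¹) * A :=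
          ENNReal.tsum_le_tsum left_piece
      _ = ENNReal.ofReal ((2:ℝ)^(Q-1) * l) * A := by
          have heq : ∀ k : ℕ, ENNReal.ofReal ((2:ℝ)^(Q-1) * l * ((2:ℝ)^(k+1))⁻¹) * A =
              (ENNReal.ofReal ((2:ℝ)^(Q-1) * l) * A) * ENNReal.ofReal (((2:ℝ)^(k+1))⁻¹) := by
            intro k
            rw [ENNReal.ofReal_mul (by positivity)]
            ring
          simp_rw [heq]
          rw [ENNReal.tsum_mul_left, pdml_geom, mul_one]
  have right_sum : (∫⁻ t in Ico (l/2) l, f t) ≤ ENNReal.ofReal ((2:ℝ)^(Q-1) * l) * B := by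
    rw [pdml_dyadic_union_right hl]
    calc (∫⁻ t in ⋃ k : ℕ, Ico (l - (l/2)/2^k) (l - (l/2)/2^(k+1)), f t)
        ≤ ∑' k : ℕ, ∫⁻ t in Ico (l - (l/2)/2^k) (l - (l/2)/2^(k+1)), f t := lintegral_iUnion_le _ _
      _ ≤ ∑' k : ℕ, ENNReal.ofReal ((2:ℝ)^(Q-1) * l * ((2:ℝ)^(k+1))⁻¹) * B :=
          ENNReal.tsum_le_tsum right_piece
      _ = ENNReal.ofReal ((2:ℝ)^(Q-1) * l) * B := by
          have heq : ∀ k : ℕ, ENNReal.ofReal ((2:ℝ)^(Q-1) * l * ((2:ℝ)^(k+1))⁻¹) * B =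
              (ENNReal.ofReal ((2:ℝ)^(Q-1) * l) * B) * ENNReal.ofReal (((2:ℝ)^(k+1))⁻¹) := by
            intro k
            rw [ENNReal.ofReal_mul (by positivity)]
            ring
          simp_rw [heq]
          rw [ENNReal.tsum_mul_left, pdml_geom, mul_one]
  -- splitting
  have split : (∫⁻ t in Icc (0:ℝ) l, f t) ≤
      (∫⁻ t in Ioc (0:ℝ) (l/2), f t) + ∫⁻ t in Ico (l/2) l, f t := by
    have hsub : Icc (0:ℝ) l ⊆ (Ioc (0:ℝ) (l/2) ∪ Ico (l/2) l) ∪ ({0} ∪ {l}) := by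
      intro t ht
      obtain ⟨h0, h1⟩ := ht
      rcases eq_or_lt_of_le h0 with h0' | h0'
      · exact Or.inr (Or.inl (by simp [← h0']))
      rcases eq_or_lt_of_le h1 with h1' | h1'
      · exact Or.inr (Or.inr (by simp [h1']))
      rcases le_or_gt t (l/2) with h2 | h2
      · exact Or.inl (Or.inl ⟨h0', h2⟩)
      · exact Or.inl (Or.inr ⟨h2.le, h1'⟩)
    have hnull : (volume : Measure ℝ) ({(0:ℝ)} ∪ {l}) = 0 :=
      le_antisymm ((measure_union_le _ _).trans (by simp)) zero_le
    calc (∫⁻ t in Icc (0:ℝ) l, f t)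
        ≤ ∫⁻ t in (Ioc (0:ℝ) (l/2) ∪ Ico (l/2) l) ∪ ({0} ∪ {l}), f t :=
          lintegral_mono_set hsub
      _ ≤ (∫⁻ t in Ioc (0:ℝ) (l/2) ∪ Ico (l/2) l, f t) + ∫⁻ t in ({0} ∪ {l} : Set ℝ), f t :=
          lintegral_union_le _ _ _
      _ ≤ ((∫⁻ t in Ioc (0:ℝ) (l/2), f t) + ∫⁻ t in Ico (l/2) l, f t) + 0 := by
          gcongr
          · exact lintegral_union_le _ _ _
          · rw [setLIntegral_measure_zero _ _ hnull]
      _ = (∫⁻ t in Ioc (0:ℝ) (l/2), f t) + ∫⁻ t in Ico (l/2) l, f t := by rw [add_zero]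
  -- conclusion
  calc ENNReal.ofReal (1 / l) * ∫⁻ t in Icc (0:ℝ) l, f t
      ≤ ENNReal.ofReal (1 / l) *
          (ENNReal.ofReal ((2:ℝ)^(Q-1) * l) * A + ENNReal.ofReal ((2:ℝ)^(Q-1) * l) * B) :=
        mul_le_mul_right (split.trans (add_le_add left_sum right_sum)) _
    _ = ENNReal.ofReal ((2:ℝ)^(Q-1)) * (A + B) := by
        rw [← mul_add, ← mul_assoc, ← ENNReal.ofReal_mul (by positivity)]
        congr 2
        field_simp
end

section
/- Let Q ≥ 1 and let f : [0,1] → ℝ be a nonnegative Borel function such that both M₀ := sup_{0 < r ≤ 1} r^{-Q} ∫₀^r φ(t)^{Q-1} f(t) dt and M₁ := sup_{0 < r ≤ 1} r^{-Q} ∫_{1-r}^1 φ(t)^{Q-1} f(t) dt are finite, where φ(t) = min(t, 1−t). Then ∫₀^1 f(t) dt ≤ 2^{Q-1} (M₀ + M₁). -/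
open MeasureTheory Set
open scoped ENNReal

/-- summing the dyadic pieces gives the full estimate on `∫₀¹ f`. -/
theorem dyadic_sum_estimate (Q : ℝ) (hQ : 1 ≤ Q) (f : ℝ → ℝ≥0∞) (hf : Measurable f)
    (M₀ M₁ : ℝ≥0∞)
    (hM₀ : M₀ = ⨆ r ∈ Ioc (0:ℝ) 1, ENNReal.ofReal (r ^ (-Q)) *
      ∫⁻ t in Icc (0:ℝ) r, ENNReal.ofReal (min t (1 - t) ^ (Q - 1)) * f t)
    (hM₁ : M₁ = ⨆ r ∈ Ioc (0:ℝ) 1, ENNReal.ofReal (r ^ (-Q)) *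
      ∫⁻ t in Icc (1 - r) (1:ℝ), ENNReal.ofReal (min t (1 - t) ^ (Q - 1)) * f t)
    (hM₀fin : M₀ ≠ ⊤) (hM₁fin : M₁ ≠ ⊤) :
    ∫⁻ t in Icc (0:ℝ) 1, f t ≤ ENNReal.ofReal ((2:ℝ) ^ (Q - 1)) * (M₀ + M₁) := by
  classical
  have h2 : (0:ℝ) < 2 := by norm_num
  set w : ℝ → ℝ≥0∞ := fun t => ENNReal.ofReal (min t (1 - t) ^ (Q - 1)) with hw
  have hwt : ∀ t : ℝ, w t = ENNReal.ofReal (min t (1 - t) ^ (Q - 1)) := fun t => rfl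
  set a : ℕ → ℝ := fun n => (2:ℝ) ^ (-((n:ℝ)+1)) with ha
  have hadef : ∀ n : ℕ, a n = (2:ℝ) ^ (-((n:ℝ)+1)) := fun n => rfl
  have hapos : ∀ n, 0 < a n := fun n => Real.rpow_pos_of_pos h2 _
  have hamono : ∀ n, a (n+1) ≤ a n := by
    intro n
    rw [hadef, hadef]
    apply Real.rpow_le_rpow_of_exponent_le (by norm_num)
    push_cast; linarith
  have haeq : ∀ n : ℕ, a n = ((1:ℝ)/2) ^ (n+1) := by
    intro n
    rw [hadef]
    rw [show (-((n:ℝ)+1)) = (-((n+1:ℕ):ℝ)) by push_cast; ring]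
    rw [Real.rpow_neg h2.le, Real.rpow_natCast]
    simp [one_div, inv_pow]
  have ha0 : a 0 = 1/2 := by rw [haeq]; norm_num
  have hahalf : ∀ n : ℕ, a n ≤ 1/2 := by
    intro n
    have h0 : a n ≤ a 0 := by
      rw [hadef, hadef]
      apply Real.rpow_le_rpow_of_exponent_le (by norm_num)
      push_cast
      have : (0:ℝ) ≤ (n:ℝ) := Nat.cast_nonneg n
      linarith
    linarith [ha0 ▸ h0]
  have hQ1 : 0 ≤ Q - 1 := by linarith
  -- coverage
  have hcover : Ioo (0:ℝ) 1 ⊆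
      (⋃ n, Icc (a (n+1)) (a n)) ∪ (⋃ n, Icc (1 - a n) (1 - a (n+1))) := by
    intro t ht
    have hfind : ∀ s : ℝ, 0 < s → s ≤ 1/2 → ∃ n, s ∈ Icc (a (n+1)) (a n) := by
      intro s hs hs2
      have hex : ∃ m, a m ≤ s := by
        obtain ⟨m, hm⟩ := exists_pow_lt_of_lt_one hs (show (1:ℝ)/2 < 1 by norm_num)
        refine ⟨m, ?_⟩
        rw [haeq]
        have hstep : ((1:ℝ)/2)^(m+1) ≤ ((1:ℝ)/2)^m :=
          pow_le_pow_of_le_one (by norm_num) (by norm_num) (by omega)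
        linarith
      let n := Nat.find hex
      have hn1 : a n ≤ s := Nat.find_spec hex
      cases hn : n with
      | zero =>
          refine ⟨0, ?_, ?_⟩
          · calc a 1 ≤ a 0 := hamono 0
              _ ≤ s := by rw [← hn]; exact hn1
          · exact le_of_le_of_eq hs2 ha0.symm
      | succ k =>
          refine ⟨k, ?_, ?_⟩
          · rw [← hn]; exact hn1
          · have hmin := Nat.find_min hex (m := k) (by omega)
            push_neg at hmin
            exact hmin.le
    rcases le_or_gt t (1/2) with hhalf | hhalf
    · obtain ⟨n, hn⟩ := hfind t ht.1 hhalf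
      exact Or.inl (mem_iUnion.mpr ⟨n, hn⟩)
    · obtain ⟨n, hn1, hn2⟩ := hfind (1 - t) (by linarith [ht.2]) (by linarith)
      refine Or.inr (mem_iUnion.mpr ⟨n, ?_, ?_⟩)
      · linarith
      · linarith
  -- bound for the sup-based integrals
  have lemA : ∀ r ∈ Ioc (0:ℝ) 1,
      ∫⁻ t in Icc (0:ℝ) r, w t * f t ≤ ENNReal.ofReal (r ^ Q) * M₀ := by
    intro r hr
    have h1 : ENNReal.ofReal (r ^ (-Q)) * (∫⁻ t in Icc (0:ℝ) r, w t * f t) ≤ M₀ := by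
      rw [hM₀]
      exact le_iSup₂ (f := fun r (_ : r ∈ Ioc (0:ℝ) 1) =>
        ENNReal.ofReal (r ^ (-Q)) * ∫⁻ t in Icc (0:ℝ) r, w t * f t) r hr
    calc ∫⁻ t in Icc (0:ℝ) r, w t * f t
        = ENNReal.ofReal (r ^ Q) * (ENNReal.ofReal (r ^ (-Q)) *
            ∫⁻ t in Icc (0:ℝ) r, w t * f t) := by
          rw [← mul_assoc, ← ENNReal.ofReal_mul (Real.rpow_nonneg hr.1.le Q), ← Real.rpow_add hr.1]
          simp
      _ ≤ _ := mul_le_mul_right h1 _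
  have lemB : ∀ r ∈ Ioc (0:ℝ) 1,
      ∫⁻ t in Icc (1 - r) (1:ℝ), w t * f t ≤ ENNReal.ofReal (r ^ Q) * M₁ := by
    intro r hr
    have h1 : ENNReal.ofReal (r ^ (-Q)) * (∫⁻ t in Icc (1 - r) (1:ℝ), w t * f t) ≤ M₁ := by
      rw [hM₁]
      exact le_iSup₂ (f := fun r (_ : r ∈ Ioc (0:ℝ) 1) =>
        ENNReal.ofReal (r ^ (-Q)) * ∫⁻ t in Icc (1 - r) (1:ℝ), w t * f t) r hr
    calc ∫⁻ t in Icc (1 - r) (1:ℝ), w t * f t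
        = ENNReal.ofReal (r ^ Q) * (ENNReal.ofReal (r ^ (-Q)) *
            ∫⁻ t in Icc (1 - r) (1:ℝ), w t * f t) := by
          rw [← mul_assoc, ← ENNReal.ofReal_mul (Real.rpow_nonneg hr.1.le Q), ← Real.rpow_add hr.1]
          simp
      _ ≤ _ := mul_le_mul_right h1 _
  have hhalfE : ENNReal.ofReal ((1:ℝ)/2) = (2:ℝ≥0∞)⁻¹ := by
    rw [one_div, ENNReal.ofReal_inv_of_pos h2]
    norm_num
  -- combined coefficient identity
  have hcoef : ∀ n : ℕ, ENNReal.ofReal ((a (n+1)) ^ (-(Q-1)) * (a n) ^ Q)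
      = ENNReal.ofReal ((2:ℝ)^(Q-1)) * (2⁻¹:ℝ≥0∞)^(n+1) := by
    intro n
    have e1 : a (n+1) = (2:ℝ) ^ (-((n:ℝ)+2)) := by
      rw [hadef]
      congr 1
      push_cast
      ring
    have key : (a (n+1)) ^ (-(Q-1)) * (a n) ^ Q = (2:ℝ)^(Q-1) * a n := by
      rw [e1, hadef n]
      rw [← Real.rpow_mul h2.le, ← Real.rpow_mul h2.le, ← Real.rpow_add h2,
        ← Real.rpow_add h2]
      congr 1
      ring
    rw [key, ENNReal.ofReal_mul (by positivity), haeq n,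
      ENNReal.ofReal_pow (by norm_num), hhalfE]
  have hanonneg : ∀ n, (0:ℝ) ≤ a n := fun n => (hapos n).le
  -- pointwise bound helper
  have hpt : ∀ n : ℕ, ∀ t : ℝ, a (n+1) ≤ min t (1 - t) →
      f t ≤ ENNReal.ofReal ((a (n+1)) ^ (-(Q-1))) * (w t * f t) := by
    intro n t hmin
    have hcpos : 0 < a (n+1) := hapos _
    have hφ : (a (n+1)) ^ (Q-1) ≤ min t (1 - t) ^ (Q-1) :=
      Real.rpow_le_rpow hcpos.le hmin hQ1
    have hone : (1:ℝ≥0∞) ≤ ENNReal.ofReal ((a (n+1)) ^ (-(Q-1))) * w t := by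
      rw [hwt t, ← ENNReal.ofReal_mul (by positivity)]
      have hR : (1:ℝ) ≤ (a (n+1)) ^ (-(Q-1)) * min t (1-t) ^ (Q-1) := by
        have hc1 : (a (n+1)) ^ (-(Q-1)) * (a (n+1)) ^ (Q-1) = 1 := by
          rw [← Real.rpow_add hcpos]; simp
        calc (1:ℝ) = (a (n+1)) ^ (-(Q-1)) * (a (n+1)) ^ (Q-1) := hc1.symm
          _ ≤ _ := mul_le_mul_of_nonneg_left hφ (by positivity)
      calc (1:ℝ≥0∞) = ENNReal.ofReal 1 := by simp
        _ ≤ _ := ENNReal.ofReal_le_ofReal hR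
    calc f t = 1 * f t := (one_mul _).symm
      _ ≤ (ENNReal.ofReal ((a (n+1)) ^ (-(Q-1))) * w t) * f t := mul_le_mul_left hone _
      _ = _ := by rw [mul_assoc]
  have leftbound : ∀ n : ℕ,
      ∫⁻ t in Icc (a (n+1)) (a n), f t
        ≤ ENNReal.ofReal ((2:ℝ)^(Q-1)) * (2⁻¹:ℝ≥0∞)^(n+1) * M₀ := by
    intro n
    have hsub : Icc (a (n+1)) (a n) ⊆ Icc 0 (a n) :=
      Icc_subset_Icc_left (hanonneg _)
    calc ∫⁻ t in Icc (a (n+1)) (a n), f t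
        ≤ ∫⁻ t in Icc (a (n+1)) (a n),
            ENNReal.ofReal ((a (n+1)) ^ (-(Q-1))) * (w t * f t) := by
          apply setLIntegral_mono' measurableSet_Icc
          intro t ht
          apply hpt n t
          refine le_min ht.1 ?_
          have h1 : t ≤ 1/2 := le_trans ht.2 (hahalf n)
          have h3 : a (n+1) ≤ 1/2 := hahalf (n+1)
          linarith
      _ = ENNReal.ofReal ((a (n+1)) ^ (-(Q-1))) *
            ∫⁻ t in Icc (a (n+1)) (a n), w t * f t :=
          lintegral_const_mul' _ _ ENNReal.ofReal_ne_top
      _ ≤ ENNReal.ofReal ((a (n+1)) ^ (-(Q-1))) *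
            ∫⁻ t in Icc 0 (a n), w t * f t := by
          gcongr
      _ ≤ ENNReal.ofReal ((a (n+1)) ^ (-(Q-1))) *
            (ENNReal.ofReal ((a n) ^ Q) * M₀) := by
          gcongr
          exact lemA (a n) ⟨hapos n, le_trans (hahalf n) (by norm_num)⟩
      _ = ENNReal.ofReal ((2:ℝ)^(Q-1)) * (2⁻¹:ℝ≥0∞)^(n+1) * M₀ := by
          rw [← mul_assoc, ← ENNReal.ofReal_mul (by positivity), hcoef n]
  have rightbound : ∀ n : ℕ,
      ∫⁻ t in Icc (1 - a n) (1 - a (n+1)), f t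
        ≤ ENNReal.ofReal ((2:ℝ)^(Q-1)) * (2⁻¹:ℝ≥0∞)^(n+1) * M₁ := by
    intro n
    have hsub : Icc (1 - a n) (1 - a (n+1)) ⊆ Icc (1 - a n) 1 := by
      apply Icc_subset_Icc_right
      have := hapos (n+1); linarith
    calc ∫⁻ t in Icc (1 - a n) (1 - a (n+1)), f t
        ≤ ∫⁻ t in Icc (1 - a n) (1 - a (n+1)),
            ENNReal.ofReal ((a (n+1)) ^ (-(Q-1))) * (w t * f t) := by
          apply setLIntegral_mono' measurableSet_Icc
          intro t ht
          apply hpt n t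
          have h1 : 1 - a n ≤ t := ht.1
          have h2' : t ≤ 1 - a (n+1) := ht.2
          have h3 : a n ≤ 1/2 := hahalf n
          have h4 : a (n+1) ≤ 1/2 := hahalf (n+1)
          refine le_min (by linarith) (by linarith)
      _ = ENNReal.ofReal ((a (n+1)) ^ (-(Q-1))) *
            ∫⁻ t in Icc (1 - a n) (1 - a (n+1)), w t * f t :=
          lintegral_const_mul' _ _ ENNReal.ofReal_ne_top
      _ ≤ ENNReal.ofReal ((a (n+1)) ^ (-(Q-1))) *
            ∫⁻ t in Icc (1 - a n) 1, w t * f t := by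
          gcongr
      _ ≤ ENNReal.ofReal ((a (n+1)) ^ (-(Q-1))) *
            (ENNReal.ofReal ((a n) ^ Q) * M₁) := by
          gcongr
          exact lemB (a n) ⟨hapos n, le_trans (hahalf n) (by norm_num)⟩
      _ = ENNReal.ofReal ((2:ℝ)^(Q-1)) * (2⁻¹:ℝ≥0∞)^(n+1) * M₁ := by
          rw [← mul_assoc, ← ENNReal.ofReal_mul (by positivity), hcoef n]
  have hgeo : ∑' n : ℕ, (2⁻¹:ℝ≥0∞)^(n+1) = 1 := by
    have hsplit : ∑' n : ℕ, (2⁻¹:ℝ≥0∞)^(n+1) = 2⁻¹ * ∑' n : ℕ, (2⁻¹:ℝ≥0∞)^n := by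
      rw [← ENNReal.tsum_mul_left]
      congr 1
      funext n
      rw [pow_succ, mul_comm]
    rw [hsplit, ENNReal.tsum_geometric, ENNReal.one_sub_inv_two, inv_inv,
      ENNReal.inv_mul_cancel (by norm_num) (by norm_num)]
  calc ∫⁻ t in Icc (0:ℝ) 1, f t
      = ∫⁻ t in Ioo (0:ℝ) 1, f t := (setLIntegral_congr Ioo_ae_eq_Icc).symm
    _ ≤ ∫⁻ t in (⋃ n, Icc (a (n+1)) (a n)) ∪ (⋃ n, Icc (1 - a n) (1 - a (n+1))), f t :=
        lintegral_mono_set hcover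
    _ ≤ (∫⁻ t in ⋃ n, Icc (a (n+1)) (a n), f t)
        + ∫⁻ t in ⋃ n, Icc (1 - a n) (1 - a (n+1)), f t :=
        lintegral_union_le _ _ _
    _ ≤ (∑' n, ∫⁻ t in Icc (a (n+1)) (a n), f t)
        + ∑' n, ∫⁻ t in Icc (1 - a n) (1 - a (n+1)), f t := by
        gcongr <;> exact lintegral_iUnion_le _ _
    _ ≤ (∑' n : ℕ, ENNReal.ofReal ((2:ℝ)^(Q-1)) * (2⁻¹:ℝ≥0∞)^(n+1) * M₀)
        + ∑' n : ℕ, ENNReal.ofReal ((2:ℝ)^(Q-1)) * (2⁻¹:ℝ≥0∞)^(n+1) * M₁ := by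
        gcongr with n n
        exacts [leftbound n, rightbound n]
    _ = ENNReal.ofReal ((2:ℝ)^(Q-1)) * (M₀ + M₁) := by
        simp only [mul_assoc]
        rw [ENNReal.tsum_mul_left, ENNReal.tsum_mul_left, ENNReal.tsum_mul_right,
          ENNReal.tsum_mul_right, hgeo]
        ring
end

section
/- Let l > 0, Q ≥ 1, and let g : (0,l) → ℝ be a measurable function satisfying C^{-1} φ_l(t)^{Q-1} ≤ g(t) ≤ C φ_l(t)^{Q-1} for all t ∈ (0,l), where φ_l(t) = min(t, l−t) and C ≥ 1. Then for every nonnegative measurable h on (0,l), (1/l)∫₀^l (1/g(t)) · h(t) dt ≤ C · C_Q ( sup_{0<r≤l} r^{-Q} ∫₀^r h(t) dt + sup_{0<r≤l} r^{-Q} ∫_{l-r}^l h(t) dt ), where C_Q = 2^{Q-1}. -/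
open MeasureTheory Set
open scoped ENNReal

-- arithmetic for the dyadic bound
lemma wde_arith (l Q : ℝ) (hl : 0 < l) (k : ℕ) :
    (l / 2 ^ (k + 2)) ^ (1 - Q) * (l / 2 ^ (k + 1)) ^ Q
      = l * 2 ^ (Q - 2) * ((2:ℝ)⁻¹) ^ k := by
  have h2 : (0:ℝ) < 2 := two_pos
  have e : ∀ m : ℕ, l / 2 ^ m = l * (2:ℝ) ^ (-(m:ℝ)) := by
    intro m
    rw [Real.rpow_neg h2.le, Real.rpow_natCast, div_eq_mul_inv]
  rw [e, e,
    Real.mul_rpow hl.le (Real.rpow_nonneg h2.le _),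
    Real.mul_rpow hl.le (Real.rpow_nonneg h2.le _),
    ← Real.rpow_natCast (2:ℝ)⁻¹ k, ← Real.rpow_neg_one (2:ℝ),
    ← Real.rpow_mul h2.le, ← Real.rpow_mul h2.le, ← Real.rpow_mul h2.le]
  push_cast
  calc l ^ (1 - Q) * 2 ^ (-((k:ℝ)+2) * (1 - Q)) * (l ^ Q * 2 ^ (-((k:ℝ)+1) * Q))
      = (l ^ (1 - Q) * l ^ Q) * ((2:ℝ) ^ (-((k:ℝ)+2) * (1 - Q)) * 2 ^ (-((k:ℝ)+1) * Q)) := by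
        ring_nf
    _ = l ^ ((1 - Q) + Q) * (2:ℝ) ^ (-((k:ℝ)+2) * (1 - Q) + -((k:ℝ)+1) * Q) := by
        rw [Real.rpow_add hl, Real.rpow_add h2]
    _ = l * 2 ^ (Q - 2) * 2 ^ (-1 * (k:ℝ)) := by
        rw [show (1 - Q) + Q = 1 by ring, Real.rpow_one,
          show -((k:ℝ)+2) * (1 - Q) + -((k:ℝ)+1) * Q = (Q - 2) + (-1 * (k:ℝ)) by ring,
          Real.rpow_add h2, mul_assoc]

lemma wde_union (l : ℝ) (hl : 0 < l) :
    Ioc (0:ℝ) (l / 2) = ⋃ k : ℕ, Ioc (l / 2 ^ (k + 2)) (l / 2 ^ (k + 1)) := by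
  ext t
  simp only [mem_Ioc, mem_iUnion]
  constructor
  · rintro ⟨ht0, htl⟩
    classical
    have hex : ∃ k : ℕ, l / 2 ^ (k + 2) < t := by
      obtain ⟨n, hn⟩ := pow_unbounded_of_one_lt (l / t) (one_lt_two (α := ℝ))
      refine ⟨n, ?_⟩
      have h1 : l < t * 2 ^ n := by
        rw [div_lt_iff₀ ht0] at hn; linarith
      have h2 : t * 2 ^ n ≤ t * 2 ^ (n + 2) := by
        have := pow_le_pow_right₀ (one_le_two (α := ℝ)) (Nat.le_add_right n 2)
        nlinarith
      rw [div_lt_iff₀ (by positivity)]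
      linarith
    refine ⟨Nat.find hex, Nat.find_spec hex, ?_⟩
    rcases Nat.eq_zero_or_eq_succ_pred (Nat.find hex) with h0 | hs
    · rw [h0]; simpa using htl
    · have hlt : Nat.find hex - 1 < Nat.find hex := by omega
      have := Nat.find_min hex hlt
      push_neg at this
      have : t ≤ l / 2 ^ (Nat.find hex - 1 + 2) := this
      calc t ≤ l / 2 ^ (Nat.find hex - 1 + 2) := this
        _ = l / 2 ^ (Nat.find hex + 1) := by congr 2; omega
  · rintro ⟨k, hk1, hk2⟩
    refine ⟨lt_trans (by positivity) hk1, hk2.trans ?_⟩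
    apply div_le_div_of_nonneg_left hl.le two_pos
    calc (2:ℝ) = 2 ^ 1 := (pow_one 2).symm
      _ ≤ 2 ^ (k + 1) := pow_le_pow_right₀ one_le_two (by omega)

lemma wde_disj (l : ℝ) (hl : 0 < l) :
    Pairwise (Function.onFun Disjoint fun k : ℕ => Ioc (l / 2 ^ (k + 2)) (l / 2 ^ (k + 1))) := by
  have key : ∀ i j : ℕ, i < j →
      Disjoint (Ioc (l / 2 ^ (i + 2)) (l / 2 ^ (i + 1))) (Ioc (l / 2 ^ (j + 2)) (l / 2 ^ (j + 1))) := by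
    intro i j hij
    rw [Set.disjoint_left]
    intro t hti htj
    have h1 : l / 2 ^ (j + 1) ≤ l / 2 ^ (i + 2) := by
      apply div_le_div_of_nonneg_left hl.le (by positivity)
      exact pow_le_pow_right₀ one_le_two (by omega)
    exact absurd hti.1 (not_lt.mpr (htj.2.trans h1))
  intro i j hij
  rcases hij.lt_or_gt with hlt | hlt
  · exact key i j hlt
  · exact (key j i hlt).symm

lemma wde_left (l Q : ℝ) (hl : 0 < l) (hQ : 1 ≤ Q) (h : ℝ → ℝ≥0∞) (hh : Measurable h) :
    ∫⁻ t in Ioc (0:ℝ) (l / 2), h t * ENNReal.ofReal (t ^ (1 - Q)) ≤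
      ENNReal.ofReal (l * 2 ^ (Q - 1)) *
        ⨆ r ∈ Ioc (0:ℝ) l, ENNReal.ofReal (r ^ (-Q)) * ∫⁻ t in Ioc (0:ℝ) r, h t := by
  set A := ⨆ r ∈ Ioc (0:ℝ) l, ENNReal.ofReal (r ^ (-Q)) * ∫⁻ t in Ioc (0:ℝ) r, h t with hA
  have hFr : ∀ r, r ∈ Ioc (0:ℝ) l → ∫⁻ t in Ioc (0:ℝ) r, h t ≤ ENNReal.ofReal (r ^ Q) * A := by
    intro r hr
    have h1 : ENNReal.ofReal (r ^ (-Q)) * ∫⁻ t in Ioc (0:ℝ) r, h t ≤ A := by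
      rw [hA]
      exact le_iSup₂ (f := fun r _ => ENNReal.ofReal (r ^ (-Q)) * ∫⁻ t in Ioc (0:ℝ) r, h t) r hr
    have h2 : ENNReal.ofReal (r ^ Q) * ENNReal.ofReal (r ^ (-Q)) = 1 := by
      rw [← ENNReal.ofReal_mul (Real.rpow_nonneg hr.1.le Q), ← Real.rpow_add hr.1, add_neg_cancel,
        Real.rpow_zero, ENNReal.ofReal_one]
    calc ∫⁻ t in Ioc (0:ℝ) r, h t
        = ENNReal.ofReal (r ^ Q) * ENNReal.ofReal (r ^ (-Q)) * ∫⁻ t in Ioc (0:ℝ) r, h t := by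
          rw [h2, one_mul]
      _ = ENNReal.ofReal (r ^ Q) * (ENNReal.ofReal (r ^ (-Q)) * ∫⁻ t in Ioc (0:ℝ) r, h t) :=
          mul_assoc _ _ _
      _ ≤ ENNReal.ofReal (r ^ Q) * A := mul_le_mul_right h1 _
  have hterm : ∀ k : ℕ,
      ∫⁻ t in Ioc (l / 2 ^ (k + 2)) (l / 2 ^ (k + 1)), h t * ENNReal.ofReal (t ^ (1 - Q)) ≤
        ENNReal.ofReal (l * 2 ^ (Q - 2)) * A * ENNReal.ofReal 2⁻¹ ^ k := by
    intro k
    have ha : 0 < l / 2 ^ (k + 2) := by positivity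
    have hb : l / 2 ^ (k + 1) ∈ Ioc (0:ℝ) l :=
      ⟨by positivity, div_le_self hl.le (one_le_pow₀ one_le_two)⟩
    calc ∫⁻ t in Ioc (l / 2 ^ (k + 2)) (l / 2 ^ (k + 1)), h t * ENNReal.ofReal (t ^ (1 - Q))
        ≤ ∫⁻ t in Ioc (l / 2 ^ (k + 2)) (l / 2 ^ (k + 1)),
            h t * ENNReal.ofReal ((l / 2 ^ (k + 2)) ^ (1 - Q)) := by
          apply setLIntegral_mono' measurableSet_Ioc
          intro t ht
          exact mul_le_mul_right (ENNReal.ofReal_le_ofReal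
            (Real.rpow_le_rpow_of_nonpos ha ht.1.le (by linarith))) _
      _ = (∫⁻ t in Ioc (l / 2 ^ (k + 2)) (l / 2 ^ (k + 1)), h t) *
            ENNReal.ofReal ((l / 2 ^ (k + 2)) ^ (1 - Q)) :=
          lintegral_mul_const' _ _ ENNReal.ofReal_ne_top
      _ ≤ (∫⁻ t in Ioc (0:ℝ) (l / 2 ^ (k + 1)), h t) *
            ENNReal.ofReal ((l / 2 ^ (k + 2)) ^ (1 - Q)) := by
          apply mul_le_mul_left
          exact lintegral_mono_set (Ioc_subset_Ioc_left ha.le)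
      _ ≤ ENNReal.ofReal ((l / 2 ^ (k + 1)) ^ Q) * A *
            ENNReal.ofReal ((l / 2 ^ (k + 2)) ^ (1 - Q)) :=
          mul_le_mul_left (hFr _ hb) _
      _ = ENNReal.ofReal ((l / 2 ^ (k + 2)) ^ (1 - Q) * (l / 2 ^ (k + 1)) ^ Q) * A := by
          rw [ENNReal.ofReal_mul (by positivity)]
          ring
      _ = ENNReal.ofReal (l * 2 ^ (Q - 2) * (2:ℝ)⁻¹ ^ k) * A := by
          rw [wde_arith l Q hl k]
      _ = ENNReal.ofReal (l * 2 ^ (Q - 2)) * A * ENNReal.ofReal 2⁻¹ ^ k := by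
          rw [ENNReal.ofReal_mul (by positivity), ENNReal.ofReal_pow (by norm_num)]
          ring
  rw [wde_union l hl, lintegral_iUnion (fun k => measurableSet_Ioc) (wde_disj l hl)]
  calc ∑' k : ℕ, ∫⁻ t in Ioc (l / 2 ^ (k + 2)) (l / 2 ^ (k + 1)),
        h t * ENNReal.ofReal (t ^ (1 - Q))
      ≤ ∑' k : ℕ, ENNReal.ofReal (l * 2 ^ (Q - 2)) * A * ENNReal.ofReal 2⁻¹ ^ k :=
        ENNReal.tsum_le_tsum hterm
    _ = ENNReal.ofReal (l * 2 ^ (Q - 2)) * A * ∑' k : ℕ, ENNReal.ofReal 2⁻¹ ^ k :=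
        ENNReal.tsum_mul_left
    _ = ENNReal.ofReal (l * 2 ^ (Q - 2)) * A * 2 := by
        rw [show ENNReal.ofReal 2⁻¹ = (2:ℝ≥0∞)⁻¹ by
            rw [ENNReal.ofReal_inv_of_pos two_pos]; norm_num,
          ENNReal.tsum_geometric, ENNReal.one_sub_inv_two, inv_inv]
    _ = ENNReal.ofReal (l * 2 ^ (Q - 1)) * A := by
        have e1 : l * 2 ^ (Q - 2) * 2 = l * 2 ^ (Q - 1) := by
          rw [mul_assoc, ← Real.rpow_add_one (by norm_num : (2:ℝ) ≠ 0) (Q - 2)]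
          congr 1
          · congr 1
            ring
        rw [show (2:ℝ≥0∞) = ENNReal.ofReal 2 by norm_num, mul_right_comm,
          ← ENNReal.ofReal_mul (by positivity), e1]

/-- combining the comparison `g ≍ φ_l^{Q-1}` with the dyadic maximal
estimate: `(1/l)∫₀^l h/g ≤ C·2^{Q-1}(sup_r r^{-Q}∫₀^r h + sup_r r^{-Q}∫_{l-r}^l h)`. -/
theorem weighted_dyadic_estimate (l Q C : ℝ) (hl : 0 < l) (hQ : 1 ≤ Q) (hC : 1 ≤ C)
    (g : ℝ → ℝ) (hg : Measurable g)
    (hglb : ∀ t ∈ Ioo (0:ℝ) l, C⁻¹ * min t (l - t) ^ (Q - 1) ≤ g t)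
    (hgub : ∀ t ∈ Ioo (0:ℝ) l, g t ≤ C * min t (l - t) ^ (Q - 1))
    (h : ℝ → ℝ≥0∞) (hh : Measurable h) :
    ENNReal.ofReal (1 / l) * ∫⁻ t in Ioo (0:ℝ) l, h t / ENNReal.ofReal (g t) ≤
      ENNReal.ofReal (C * 2 ^ (Q - 1)) *
        ((⨆ r ∈ Ioc (0:ℝ) l, ENNReal.ofReal (r ^ (-Q)) * ∫⁻ t in Ioc (0:ℝ) r, h t) +
         (⨆ r ∈ Ioc (0:ℝ) l, ENNReal.ofReal (r ^ (-Q)) * ∫⁻ t in Ico (l - r) l, h t)) := by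
  have hC0 : (0:ℝ) < C := lt_of_lt_of_le one_pos hC
  set A := ⨆ r ∈ Ioc (0:ℝ) l, ENNReal.ofReal (r ^ (-Q)) * ∫⁻ t in Ioc (0:ℝ) r, h t with hAdef
  set B := ⨆ r ∈ Ioc (0:ℝ) l, ENNReal.ofReal (r ^ (-Q)) * ∫⁻ t in Ico (l - r) l, h t with hBdef
  set K := ENNReal.ofReal (l * 2 ^ (Q - 1)) with hKdef
  -- pointwise bound on (0, l)
  have hpt : ∀ t ∈ Ioo (0:ℝ) l, h t / ENNReal.ofReal (g t) ≤
      ENNReal.ofReal C * (h t * ENNReal.ofReal (min t (l - t) ^ (1 - Q))) := by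
    intro t ht
    have hφ : 0 < min t (l - t) := lt_min ht.1 (by linarith [ht.2])
    have hg0 : 0 < C⁻¹ * min t (l - t) ^ (Q - 1) := by
      have := Real.rpow_pos_of_pos hφ (Q - 1)
      positivity
    have einv : (C⁻¹ * min t (l - t) ^ (Q - 1))⁻¹ = C * min t (l - t) ^ (1 - Q) := by
      rw [mul_inv, inv_inv, ← Real.rpow_neg hφ.le, neg_sub]
    calc h t / ENNReal.ofReal (g t) = h t * (ENNReal.ofReal (g t))⁻¹ := div_eq_mul_inv _ _
      _ ≤ h t * (ENNReal.ofReal (C⁻¹ * min t (l - t) ^ (Q - 1)))⁻¹ :=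
          mul_le_mul_right (ENNReal.inv_le_inv.mpr (ENNReal.ofReal_le_ofReal (hglb t ht))) _
      _ = h t * ENNReal.ofReal ((C⁻¹ * min t (l - t) ^ (Q - 1))⁻¹) := by
          rw [ENNReal.ofReal_inv_of_pos hg0]
      _ = h t * (ENNReal.ofReal C * ENNReal.ofReal (min t (l - t) ^ (1 - Q))) := by
          rw [einv, ENNReal.ofReal_mul hC0.le]
      _ = ENNReal.ofReal C * (h t * ENNReal.ofReal (min t (l - t) ^ (1 - Q))) := by ring
  -- left piece
  have hleft : ∫⁻ t in Ioc (0:ℝ) (l / 2), h t * ENNReal.ofReal (min t (l - t) ^ (1 - Q)) ≤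
      K * A := by
    have e1 : ∫⁻ t in Ioc (0:ℝ) (l / 2), h t * ENNReal.ofReal (min t (l - t) ^ (1 - Q)) =
        ∫⁻ t in Ioc (0:ℝ) (l / 2), h t * ENNReal.ofReal (t ^ (1 - Q)) := by
      apply setLIntegral_congr_fun measurableSet_Ioc
      intro t ht
      dsimp only
      rw [min_eq_left (by linarith [ht.1, ht.2])]
    rw [e1]
    exact wde_left l Q hl hQ h hh
  -- right piece via reflection
  have hmp : MeasurePreserving (fun s : ℝ => l - s) volume volume :=
    Measure.measurePreserving_sub_left volume l
  have hpre1 : (fun s : ℝ => l - s) ⁻¹' Ico (l / 2) l = Ioc (0:ℝ) (l / 2) := by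
    ext s
    simp only [mem_preimage, mem_Ico, mem_Ioc]
    constructor <;> intro hs <;> exact ⟨by linarith [hs.1, hs.2], by linarith [hs.1, hs.2]⟩
  have hpre2 : ∀ r : ℝ, (fun s : ℝ => l - s) ⁻¹' Ico (l - r) l = Ioc (0:ℝ) r := by
    intro r
    ext s
    simp only [mem_preimage, mem_Ico, mem_Ioc]
    constructor <;> intro hs <;> exact ⟨by linarith [hs.1, hs.2], by linarith [hs.1, hs.2]⟩
  have hGmeas : Measurable fun t : ℝ => h t * ENNReal.ofReal ((l - t) ^ (1 - Q)) :=
    hh.mul (((measurable_const.sub measurable_id).pow measurable_const).ennreal_ofReal)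
  have hright : ∫⁻ t in Ico (l / 2) l, h t * ENNReal.ofReal (min t (l - t) ^ (1 - Q)) ≤
      K * B := by
    have e1 : ∫⁻ t in Ico (l / 2) l, h t * ENNReal.ofReal (min t (l - t) ^ (1 - Q)) =
        ∫⁻ t in Ico (l / 2) l, h t * ENNReal.ofReal ((l - t) ^ (1 - Q)) := by
      apply setLIntegral_congr_fun measurableSet_Ico
      intro t ht
      dsimp only
      rw [min_eq_right (by linarith [ht.1, ht.2])]
    have e2 : ∫⁻ t in Ico (l / 2) l, h t * ENNReal.ofReal ((l - t) ^ (1 - Q)) =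
        ∫⁻ s in Ioc (0:ℝ) (l / 2), h (l - s) * ENNReal.ofReal (s ^ (1 - Q)) := by
      rw [← hmp.setLIntegral_comp_preimage measurableSet_Ico hGmeas, hpre1]
      apply setLIntegral_congr_fun measurableSet_Ioc
      intro s hs
      dsimp only
      rw [sub_sub_cancel]
    have e3 : ∀ r ∈ Ioc (0:ℝ) l,
        ∫⁻ s in Ioc (0:ℝ) r, h (l - s) = ∫⁻ t in Ico (l - r) l, h t := by
      intro r hr
      rw [← hpre2 r]
      exact hmp.setLIntegral_comp_preimage measurableSet_Ico hh
    rw [e1, e2]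
    calc ∫⁻ s in Ioc (0:ℝ) (l / 2), h (l - s) * ENNReal.ofReal (s ^ (1 - Q))
        ≤ K * ⨆ r ∈ Ioc (0:ℝ) l, ENNReal.ofReal (r ^ (-Q)) * ∫⁻ s in Ioc (0:ℝ) r, h (l - s) :=
          wde_left l Q hl hQ _ (hh.comp (measurable_const.sub measurable_id))
      _ = K * B := by
          rw [hBdef]
          congr 1
          exact biSup_congr fun r hr => by rw [e3 r hr]
  -- assemble
  have hsplit : ∫⁻ t in Ioo (0:ℝ) l, h t * ENNReal.ofReal (min t (l - t) ^ (1 - Q)) ≤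
      K * A + K * B := by
    calc ∫⁻ t in Ioo (0:ℝ) l, h t * ENNReal.ofReal (min t (l - t) ^ (1 - Q))
        ≤ ∫⁻ t in Ioc (0:ℝ) (l / 2) ∪ Ico (l / 2) l,
            h t * ENNReal.ofReal (min t (l - t) ^ (1 - Q)) := by
          apply lintegral_mono_set
          intro t ht
          rcases le_or_gt t (l / 2) with h1 | h1
          · exact Or.inl ⟨ht.1, h1⟩
          · exact Or.inr ⟨h1.le, ht.2⟩
      _ ≤ (∫⁻ t in Ioc (0:ℝ) (l / 2), h t * ENNReal.ofReal (min t (l - t) ^ (1 - Q))) +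
            ∫⁻ t in Ico (l / 2) l, h t * ENNReal.ofReal (min t (l - t) ^ (1 - Q)) :=
          lintegral_union_le _ _ _
      _ ≤ K * A + K * B := add_le_add hleft hright
  have hmain : ∫⁻ t in Ioo (0:ℝ) l, h t / ENNReal.ofReal (g t) ≤
      ENNReal.ofReal C * (K * A + K * B) := by
    calc ∫⁻ t in Ioo (0:ℝ) l, h t / ENNReal.ofReal (g t)
        ≤ ∫⁻ t in Ioo (0:ℝ) l,
            ENNReal.ofReal C * (h t * ENNReal.ofReal (min t (l - t) ^ (1 - Q))) :=
          setLIntegral_mono' measurableSet_Ioo hpt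
      _ = ENNReal.ofReal C *
            ∫⁻ t in Ioo (0:ℝ) l, h t * ENNReal.ofReal (min t (l - t) ^ (1 - Q)) :=
          lintegral_const_mul' _ _ ENNReal.ofReal_ne_top
      _ ≤ ENNReal.ofReal C * (K * A + K * B) := mul_le_mul_right hsplit _
  calc ENNReal.ofReal (1 / l) * ∫⁻ t in Ioo (0:ℝ) l, h t / ENNReal.ofReal (g t)
      ≤ ENNReal.ofReal (1 / l) * (ENNReal.ofReal C * (K * A + K * B)) :=
        mul_le_mul_right hmain _
    _ = (ENNReal.ofReal (1 / l) * ENNReal.ofReal C * K) * (A + B) := by ring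
    _ = ENNReal.ofReal (C * 2 ^ (Q - 1)) * (A + B) := by
        rw [hKdef, ← ENNReal.ofReal_mul (by positivity), ← ENNReal.ofReal_mul (by positivity)]
        congr 1
        field_simp
end
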